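/- arXiv:2002.05226 — 3 statements merged into one kernel-verified Lean document; each statement's English description precedes it below -/
import Mathlib

section
/- Suppose σ_{XW·ZR} = 0, σ_{YW·ZR} = 0, and σ_{XY·ZR} = 0 (where each of these is defined via the recursion through R from the level-Z partial covariances). Then σ_{XY·ZW} = σ_{XY·Z} · σ²_{R·ZW} / σ²_{R·Z}. -/
/-- If `σ_{XW·ZR} = 0`, `σ_{YW·ZR} = 0` and `σ_{XY·ZR} = 0` (unfolded via the recursion
through `R`), then `σ_{XY·ZW} = σ_{XY·Z} · σ²_{R·ZW} / σ²_{R·Z}`. -/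
theorem stmt_1 (σXY σXW σWY σXR σRW σRY σRR σWW : ℝ)
    (hR : σRR ≠ 0) (hW : σWW ≠ 0)
    (hXW : σXW = σXR * σRW / σRR)   -- σ_{XW·ZR} = 0
    (hYW : σWY = σRY * σRW / σRR)   -- σ_{YW·ZR} = 0
    (hXY : σXY = σXR * σRY / σRR) : -- σ_{XY·ZR} = 0
    σXY - σXW * σWY / σWW = σXY * (σRR - σRW * σRW / σWW) / σRR := by subst hXW hYW hXY; field_simp
end

section
/- Suppose σ_{YW·ZX} = 0, i.e. σ_{YW·Z} = σ_{YX·Z}σ_{XW·Z}/σ²_{X·Z}. Then σ_{XY·ZW} = σ_{XY·Z} · σ²_{X·ZW} / σ²_{X·Z}. -/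
/-- If `σ_{YW·ZX} = 0`, i.e. `σ_{YW·Z} = σ_{YX·Z}σ_{XW·Z}/σ²_{X·Z}`, then
`σ_{XY·ZW} = σ_{XY·Z} · σ²_{X·ZW} / σ²_{X·Z}`. -/
theorem stmt_2 (σXY σXW σWY σXX σWW : ℝ) (hX : σXX ≠ 0) (hW : σWW ≠ 0)
    (h : σWY = σXY * σXW / σXX) :
    σXY - σXW * σWY / σWW = σXY * (σXX - σXW * σXW / σWW) / σXX := by
  subst h; field_simp
end

section
/- Let X, Y, Z, W satisfy Z = αX + ε_Z, Y = βZ + ε_Y, W = γZ + ε_W with pairwise independent mean-zero errors ε_Z, ε_Y, ε_W independent of X. Then the partial regression coefficient r_{YX·W} = σ_{XY·W}/σ²_{X·W} equals αβ · (σ²_X/σ²_{X·W}) · (σ²_{Z·W}/σ²_Z), where partial (co)variances given W are defined by σ_{AB·W} = Cov(A,B) − Cov(A,W)Cov(W,B)/Var(W). -/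
/-!
Partial covariances given `W` are bilinear in their first two arguments, so a term that is
uncorrelated with both the regressor and `W` drops out: `σ_{XY·W} = β σ_{XZ·W}`.
Since `W` is a noisy copy `γZ + ε_W` of `Z`, both `σ_{XZ·W}` and `σ_{ZZ·W}` equal their
unconditional counterparts times the same factor `1 - γ² σ²_Z / σ²_W`, whence
`σ_{XZ·W} σ²_Z = σ_{XZ} σ_{ZZ·W}`, and `σ_{XZ} = α σ²_X` finishes the computation.
-/

open MeasureTheory ProbabilityTheory

noncomputable def cov {Ω : Type*} [MeasurableSpace Ω] (μ : MeasureTheory.Measure Ω)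
    (f g : Ω → ℝ) : ℝ :=
  ∫ ω, (f ω - ∫ x, f x ∂μ) * (g ω - ∫ x, g x ∂μ) ∂μ

/-- Partial covariance given `W`: `σ_{AB·W} = Cov(A,B) − Cov(A,W)Cov(W,B)/Var(W)`. -/
noncomputable def pcov {Ω : Type*} [MeasurableSpace Ω] (μ : MeasureTheory.Measure Ω)
    (f g w : Ω → ℝ) : ℝ :=
  cov μ f g - cov μ f w * cov μ w g / cov μ w w

section Covariance

variable {Ω : Type*} [MeasurableSpace Ω] {μ : Measure Ω} {A B X Z e W : Ω → ℝ}

theorem cov_eq_covariance (f g : Ω → ℝ) : cov μ f g = covariance f g μ := rfl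

theorem cov_comm (f g : Ω → ℝ) : cov μ f g = cov μ g f :=
  covariance_comm f g

theorem memLp_const_mul_add (hA : MemLp A 2 μ) (hB : MemLp B 2 μ) (c : ℝ) :
    MemLp (fun ω => c * A ω + B ω) 2 μ :=
  (hA.const_mul c).add hB

variable [IsFiniteMeasure μ]

theorem cov_const_mul_add_left (hA : MemLp A 2 μ) (hB : MemLp B 2 μ) (hX : MemLp X 2 μ)
    (c : ℝ) : cov μ (fun ω => c * A ω + B ω) X = c * cov μ A X + cov μ B X := by
  simp only [cov_eq_covariance]
  rw [← covariance_const_mul_left c]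
  exact covariance_add_left (hA.const_mul c) hB hX

theorem cov_const_mul_add_right (hX : MemLp X 2 μ) (hA : MemLp A 2 μ) (hB : MemLp B 2 μ)
    (c : ℝ) : cov μ X (fun ω => c * A ω + B ω) = c * cov μ X A + cov μ X B := by
  rw [cov_comm, cov_const_mul_add_left hA hB hX, cov_comm A, cov_comm B]

theorem cov_const_mul_add_left_eq_zero (hA : MemLp A 2 μ) (hB : MemLp B 2 μ)
    (hX : MemLp X 2 μ) (hAX : cov μ A X = 0) (hBX : cov μ B X = 0) (c : ℝ) :
    cov μ (fun ω => c * A ω + B ω) X = 0 := by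
  rw [cov_const_mul_add_left hA hB hX, hAX, hBX, mul_zero, add_zero]

theorem pcov_const_mul_add_right (hX : MemLp X 2 μ) (hZ : MemLp Z 2 μ) (he : MemLp e 2 μ)
    (hW : MemLp W 2 μ) (hXe : cov μ X e = 0) (hWe : cov μ W e = 0) (β : ℝ) :
    pcov μ X (fun ω => β * Z ω + e ω) W = β * pcov μ X Z W := by
  rw [pcov, pcov, cov_const_mul_add_right hX hZ he, cov_const_mul_add_right hW hZ he, hXe, hWe]
  ring

theorem pcov_mul_cov_self_of_proxy (hX : MemLp X 2 μ) (hZ : MemLp Z 2 μ) (he : MemLp e 2 μ)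
    (hXe : cov μ X e = 0) (hZe : cov μ Z e = 0) (γ : ℝ) :
    pcov μ X Z (fun ω => γ * Z ω + e ω) * cov μ Z Z =
      cov μ X Z * pcov μ Z Z (fun ω => γ * Z ω + e ω) := by
  rw [pcov, pcov, cov_const_mul_add_right hX hZ he, cov_const_mul_add_right hZ hZ he,
    cov_const_mul_add_left hZ he hZ, hXe, hZe, cov_comm e Z, hZe]
  ring

end Covariance

theorem stmt_6_general {Ω : Type*} [MeasurableSpace Ω] (μ : MeasureTheory.Measure Ω)
    [IsProbabilityMeasure μ]
    (X eZ eY eW Z Y W : Ω → ℝ) (α β γ : ℝ)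
    (hZ : Z = fun ω => α * X ω + eZ ω)
    (hY : Y = fun ω => β * Z ω + eY ω)
    (hW : W = fun ω => γ * Z ω + eW ω)
    (hX2 : MemLp X 2 μ) (heZ2 : MemLp eZ 2 μ) (heY2 : MemLp eY 2 μ) (heW2 : MemLp eW 2 μ)
    (hZY : IndepFun eZ eY μ) (hZW : IndepFun eZ eW μ) (hYW : IndepFun eY eW μ)
    (hXZ : IndepFun X eZ μ) (hXY : IndepFun X eY μ) (hXW : IndepFun X eW μ)
    (hvZ : cov μ Z Z ≠ 0) :
    pcov μ X Y W / pcov μ X X W =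
      α * β * (cov μ X X / pcov μ X X W) * (pcov μ Z Z W / cov μ Z Z) := by
  have hZ2 : MemLp Z 2 μ := hZ ▸ memLp_const_mul_add hX2 heZ2 α
  have hW2 : MemLp W 2 μ := hW ▸ memLp_const_mul_add hZ2 heW2 γ
  have hXeZ : cov μ X eZ = 0 := hXZ.covariance_eq_zero hX2 heZ2
  have hXeY : cov μ X eY = 0 := hXY.covariance_eq_zero hX2 heY2
  have hXeW : cov μ X eW = 0 := hXW.covariance_eq_zero hX2 heW2
  have hZeY : cov μ Z eY = 0 := hZ ▸ cov_const_mul_add_left_eq_zero hX2 heZ2 heY2 hXeY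
    (hZY.covariance_eq_zero heZ2 heY2) α
  have hZeW : cov μ Z eW = 0 := hZ ▸ cov_const_mul_add_left_eq_zero hX2 heZ2 heW2 hXeW
    (hZW.covariance_eq_zero heZ2 heW2) α
  have hWeY : cov μ W eY = 0 := hW ▸ cov_const_mul_add_left_eq_zero hZ2 heW2 heY2 hZeY
    (hYW.symm.covariance_eq_zero heW2 heY2) γ
  have hXYW : pcov μ X Y W = β * pcov μ X Z W := hY ▸
    pcov_const_mul_add_right hX2 hZ2 heY2 hW2 hXeY hWeY β
  have hXZW : pcov μ X Z W * cov μ Z Z = cov μ X Z * pcov μ Z Z W := hW ▸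
    pcov_mul_cov_self_of_proxy hX2 hZ2 heW2 hXeW hZeW γ
  have hXZ : cov μ X Z = α * cov μ X X := by
    rw [hZ, cov_const_mul_add_right hX2 hX2 heZ2, hXeZ, add_zero]
  have hXYW' : pcov μ X Y W = α * β * cov μ X X * pcov μ Z Z W / cov μ Z Z := by
    rw [eq_div_iff hvZ, hXYW, mul_assoc, hXZW, hXZ]
    ring
  rw [hXYW']
  ring

/-- For `Z = αX + ε_Z`, `Y = βZ + ε_Y`, `W = γZ + ε_W` with pairwise independent
mean-zero errors independent of `X`:
`r_{YX·W} = σ_{XY·W}/σ²_{X·W} = αβ · (σ²_X/σ²_{X·W}) · (σ²_{Z·W}/σ²_Z)`. -/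
theorem stmt_6 {Ω : Type*} [MeasurableSpace Ω] (μ : MeasureTheory.Measure Ω)
    [IsProbabilityMeasure μ]
    (X eZ eY eW Z Y W : Ω → ℝ) (α β γ : ℝ)
    (hZ : Z = fun ω => α * X ω + eZ ω)
    (hY : Y = fun ω => β * Z ω + eY ω)
    (hW : W = fun ω => γ * Z ω + eW ω)
    (hX2 : MemLp X 2 μ) (heZ2 : MemLp eZ 2 μ) (heY2 : MemLp eY 2 μ) (heW2 : MemLp eW 2 μ)
    (hZY : IndepFun eZ eY μ) (hZW : IndepFun eZ eW μ) (hYW : IndepFun eY eW μ)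
    (hXZ : IndepFun X eZ μ) (hXY : IndepFun X eY μ) (hXW : IndepFun X eW μ)
    (hmZ : ∫ ω, eZ ω ∂μ = 0) (hmY : ∫ ω, eY ω ∂μ = 0) (hmW : ∫ ω, eW ω ∂μ = 0)
    (hvX : 0 < cov μ X X) (hveZ : 0 < cov μ eZ eZ) (hveY : 0 < cov μ eY eY)
    (hveW : 0 < cov μ eW eW)
    (hvW : cov μ W W ≠ 0) (hvZ : cov μ Z Z ≠ 0)
    (hpX : pcov μ X X W ≠ 0) :
    pcov μ X Y W / pcov μ X X W =
      α * β * (cov μ X X / pcov μ X X W) * (pcov μ Z Z W / cov μ Z Z) :=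
  stmt_6_general μ X eZ eY eW Z Y W α β γ hZ hY hW hX2 heZ2 heY2 heW2 hZY hZW hYW hXZ hXY hXW hvZ
end
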